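/- If h : D → ℝ is harmonic on a domain D ⊆ ℝⁿ and p > 0, then |h|^p is quasi-nearly subharmonic: there exists K ≥ 1 (depending only on n and p) such that |h(x)|^p ≤ (K/(νₙ rⁿ)) ∫_{B(x,r)} |h(y)|^p dm(y) for all closed balls B̄(x,r) ⊂ D. -/

import Mathlib

open MeasureTheory Metric Set

/-- The volume of the unit ball in `ℝⁿ`. -/
noncomputable def unitBallVol (n : ℕ) : ℝ :=
  (volume (ball (0 : EuclideanSpace ℝ (Fin n)) 1)).toReal

/-- A function is harmonic on an open set if it is continuous there and satisfies the mean value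
property on every closed ball contained in the set. -/
def HarmonicOnSet {n : ℕ} (h : EuclideanSpace ℝ (Fin n) → ℝ)
    (D : Set (EuclideanSpace ℝ (Fin n))) : Prop :=
  ContinuousOn h D ∧ ∀ x r, 0 < r → closedBall x r ⊆ D →
    h x = 1 / (unitBallVol n * r ^ n) * ∫ y in ball x r, h y

/-! For `p ≥ 1` the estimate holds with `K = 1`: the mean value property gives
`|h x| ≤ ⨍_{B(x,r)} |h|`, and Jensen's inequality for `t ↦ t ^ p` does the rest.

For `p < 1` consider the weighted supremum `F = sup_{y ∈ B(x,r)} (r - |y - x|) ^ (n/p) |h y|`,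
finite because `h` is continuous on the closed ball. With `d = r - |y - x|`, the mean value
property on `B(y, d/2)` and the pointwise bound `|h| ≤ |h| ^ p · (sup_{B(y, d/2)} |h|) ^ (1 - p)`
give `F ≤ 2 ^ (n/p) ν⁻¹ F ^ (1 - p) ∫_{B(x,r)} |h| ^ p`, hence
`F ^ p ≤ 2 ^ (n/p) ν⁻¹ ∫_{B(x,r)} |h| ^ p`; the weight at `y = x` is `r ^ (n/p)`,
so `K = 2 ^ (n/p)`. -/

lemma Real.le_rpow_mul_rpow_one_sub {a M p : ℝ} (ha : 0 ≤ a) (haM : a ≤ M) (hp : p ≤ 1) :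
    a ≤ a ^ p * M ^ (1 - p) := by
  rcases ha.eq_or_lt with rfl | ha
  · positivity
  calc a = a ^ p * a ^ (1 - p) := by rw [← Real.rpow_add ha, add_sub_cancel, Real.rpow_one]
    _ ≤ a ^ p * M ^ (1 - p) := by gcongr

lemma Real.rpow_le_of_le_mul_rpow_one_sub {F C p : ℝ} (hF : 0 ≤ F) (hC : 0 ≤ C) (hp : p ≠ 0)
    (h : F ≤ C * F ^ (1 - p)) : F ^ p ≤ C := by
  rcases hF.eq_or_lt with rfl | hF
  · rwa [Real.zero_rpow hp]
  have : F ^ p * F ^ (1 - p) ≤ C * F ^ (1 - p) := by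
    rwa [← Real.rpow_add hF, add_sub_cancel, Real.rpow_one]
  exact le_of_mul_le_mul_right this (by positivity)

lemma unitBallVol_pos (n : ℕ) : 0 < unitBallVol n :=
  ENNReal.toReal_pos (measure_ball_pos _ _ one_pos).ne' measure_ball_lt_top.ne

lemma measureReal_ball_eq {n : ℕ} (x : EuclideanSpace ℝ (Fin n)) {r : ℝ} (hr : 0 < r) :
    volume.real (ball x r) = unitBallVol n * r ^ n := by
  rw [measureReal_def, Measure.addHaar_ball_of_pos volume x hr, finrank_euclideanSpace_fin,
    ENNReal.toReal_mul, ENNReal.toReal_ofReal (by positivity), mul_comm, unitBallVol]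

lemma setAverage_ball_eq {n : ℕ} (f : EuclideanSpace ℝ (Fin n) → ℝ)
    (x : EuclideanSpace ℝ (Fin n)) {r : ℝ} (hr : 0 < r) :
    ⨍ y in ball x r, f y = (unitBallVol n * r ^ n)⁻¹ * ∫ y in ball x r, f y := by
  rw [setAverage_eq, measureReal_ball_eq x hr, smul_eq_mul]

lemma ContinuousOn.integrableOn_ball {X : Type*} [PseudoMetricSpace X] [ProperSpace X]
    [MeasurableSpace X] [OpensMeasurableSpace X] {μ : Measure X} [IsFiniteMeasureOnCompacts μ]
    {f : X → ℝ} {x : X} {r : ℝ} (hf : ContinuousOn f (closedBall x r)) :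
    IntegrableOn f (ball x r) μ :=
  (hf.integrableOn_compact' (isCompact_closedBall x r) measurableSet_closedBall).mono_set
    ball_subset_closedBall

def QuasiNearlySubharmonicOn {n : ℕ} (K : ℝ) (u : EuclideanSpace ℝ (Fin n) → ℝ)
    (D : Set (EuclideanSpace ℝ (Fin n))) : Prop :=
  ∀ x r, 0 < r → closedBall x r ⊆ D → u x ≤ K / (unitBallVol n * r ^ n) * ∫ y in ball x r, u y

lemma QuasiNearlySubharmonicOn.mono_const {n : ℕ} {K K' : ℝ}
    {u : EuclideanSpace ℝ (Fin n) → ℝ} {D : Set (EuclideanSpace ℝ (Fin n))}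
    (hu : QuasiNearlySubharmonicOn K u D) (hu0 : ∀ y ∈ D, 0 ≤ u y) (hK : K ≤ K') :
    QuasiNearlySubharmonicOn K' u D := by
  intro x r hr hsub
  have hint : 0 ≤ ∫ y in ball x r, u y :=
    setIntegral_nonneg measurableSet_ball fun y hy => hu0 y (hsub (ball_subset_closedBall hy))
  have hvol := unitBallVol_pos n
  refine (hu x r hr hsub).trans ?_
  gcongr

namespace HarmonicOnSet

variable {n : ℕ} {h : EuclideanSpace ℝ (Fin n) → ℝ} {D : Set (EuclideanSpace ℝ (Fin n))}
  {x : EuclideanSpace ℝ (Fin n)} {r p : ℝ}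

lemma integrableOn_ball_abs_rpow (hh : HarmonicOnSet h D) (hsub : closedBall x r ⊆ D)
    (hp : 0 ≤ p) : IntegrableOn (fun y => |h y| ^ p) (ball x r) :=
  ((hh.1.mono hsub).abs.rpow_const fun _ _ => Or.inr hp).integrableOn_ball

lemma abs_le_setAverage_abs (hh : HarmonicOnSet h D) (hr : 0 < r) (hsub : closedBall x r ⊆ D) :
    |h x| ≤ ⨍ y in ball x r, |h y| := by
  have hvol := unitBallVol_pos n
  rw [setAverage_ball_eq _ x hr, hh.2 x r hr hsub, abs_mul, one_div, abs_inv,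
    abs_of_pos (by positivity)]
  gcongr
  simpa only [Real.norm_eq_abs] using norm_integral_le_integral_norm h

theorem quasiNearlySubharmonicOn_abs_rpow_of_one_le (hh : HarmonicOnSet h D) (hp : 1 ≤ p) :
    QuasiNearlySubharmonicOn 1 (fun y => |h y| ^ p) D := by
  intro x r hr hsub
  have hp0 : 0 ≤ p := zero_le_one.trans hp
  rw [one_div, ← setAverage_ball_eq _ x hr]
  calc |h x| ^ p ≤ (⨍ y in ball x r, |h y|) ^ p := by
        gcongr
        exact hh.abs_le_setAverage_abs hr hsub
    _ ≤ ⨍ y in ball x r, |h y| ^ p :=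
        (convexOn_rpow hp).map_set_average_le
          (continuousOn_id.rpow_const fun _ _ => Or.inr hp0) isClosed_Ici
          (measure_ball_pos _ x hr).ne' measure_ball_lt_top.ne
          (ae_of_all _ fun y => abs_nonneg (h y))
          (by simpa using hh.integrableOn_ball_abs_rpow hsub zero_le_one)
          (hh.integrableOn_ball_abs_rpow hsub hp0)

lemma abs_le_of_forall_abs_le (hh : HarmonicOnSet h D) (hr : 0 < r) (hsub : closedBall x r ⊆ D)
    (hp : 0 ≤ p) (hp1 : p ≤ 1) {M : ℝ} (hM : ∀ y ∈ ball x r, |h y| ≤ M) :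
    |h x| ≤ (unitBallVol n * r ^ n)⁻¹ * (M ^ (1 - p) * ∫ y in ball x r, |h y| ^ p) := by
  have hvol := unitBallVol_pos n
  calc |h x| ≤ (unitBallVol n * r ^ n)⁻¹ * ∫ y in ball x r, |h y| :=
        setAverage_ball_eq _ x hr ▸ hh.abs_le_setAverage_abs hr hsub
    _ ≤ (unitBallVol n * r ^ n)⁻¹ * ∫ y in ball x r, |h y| ^ p * M ^ (1 - p) := by
        refine mul_le_mul_of_nonneg_left ?_ (by positivity)
        refine setIntegral_mono_on ?_ ((hh.integrableOn_ball_abs_rpow hsub hp).mul_const _)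
          measurableSet_ball fun y hy => Real.le_rpow_mul_rpow_one_sub (abs_nonneg _) (hM y hy) hp1
        simpa using hh.integrableOn_ball_abs_rpow hsub zero_le_one
    _ = (unitBallVol n * r ^ n)⁻¹ * (M ^ (1 - p) * ∫ y in ball x r, |h y| ^ p) := by
        rw [integral_mul_const, mul_comm (M ^ (1 - p))]

lemma rpow_dist_mul_abs_le (hh : HarmonicOnSet h D) (hsub : closedBall x r ⊆ D) (hp : 0 < p)
    (hp1 : p ≤ 1) {F : ℝ} (hF : ∀ z ∈ ball x r, (r - dist z x) ^ (n / p) * |h z| ≤ F)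
    {y : EuclideanSpace ℝ (Fin n)} (hy : y ∈ ball x r) :
    (r - dist y x) ^ (n / p) * |h y| ≤
      2 ^ (n / p) / unitBallVol n * F ^ (1 - p) * ∫ z in ball x r, |h z| ^ p := by
  set β : ℝ := n / p
  set c := (r - dist y x) / 2 with hc_def
  have hc : 0 < c := by have := mem_ball.1 hy; linarith
  have hF0 : 0 ≤ F :=
    (mul_nonneg (Real.rpow_nonneg (by linarith) _) (abs_nonneg _)).trans (hF y hy)
  have hball : ball y c ⊆ ball x r := ball_subset_ball' (by linarith)
  have hM : ∀ z ∈ ball y c, |h z| ≤ F / c ^ β := by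
    intro z hz
    have hcz : c ≤ r - dist z x := by
      linarith [mem_ball.1 hz, dist_triangle z y x]
    rw [le_div_iff₀' (by positivity)]
    exact (by gcongr : c ^ β * |h z| ≤ (r - dist z x) ^ β * |h z|).trans (hF z (hball hz))
  have hlocal := hh.abs_le_of_forall_abs_le hc
    ((closedBall_subset_closedBall' (by linarith)).trans hsub) hp.le hp1 hM
  have hI : ∫ z in ball y c, |h z| ^ p ≤ ∫ z in ball x r, |h z| ^ p :=
    setIntegral_mono_set (hh.integrableOn_ball_abs_rpow hsub hp.le)
      (ae_of_all _ fun z => by positivity) hball.eventuallyLE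
  have hβp : β * p = n := div_mul_cancel₀ _ hp.ne'
  set d := (c ^ β) ^ (1 - p) with hd
  have hd0 : 0 < d := by positivity
  have hcβ : c ^ β = c ^ n * d := by
    rw [hd, ← Real.rpow_natCast, ← Real.rpow_mul hc.le, ← Real.rpow_add hc]
    congr 1
    linarith
  have hvol := unitBallVol_pos n
  calc (r - dist y x) ^ β * |h y| = 2 ^ β * c ^ β * |h y| := by
        rw [← Real.mul_rpow (by norm_num) hc.le, hc_def]
        ring_nf
    _ ≤ 2 ^ β * c ^ β *
          ((unitBallVol n * c ^ n)⁻¹ * ((F / c ^ β) ^ (1 - p) * ∫ z in ball x r, |h z| ^ p)) := by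
        gcongr
        exact hlocal.trans (by gcongr)
    _ = 2 ^ β / unitBallVol n * F ^ (1 - p) * ∫ z in ball x r, |h z| ^ p := by
        rw [Real.div_rpow hF0 (by positivity), ← hd, hcβ]
        field_simp

theorem quasiNearlySubharmonicOn_abs_rpow_of_le_one (hh : HarmonicOnSet h D) (hp : 0 < p)
    (hp1 : p ≤ 1) : QuasiNearlySubharmonicOn (2 ^ (n / p)) (fun y => |h y| ^ p) D := by
  intro x r hr hsub
  set g := fun z => (r - dist z x) ^ (n / p) * |h z|
  have hg : ContinuousOn g (closedBall x r) :=
    ((continuous_const.sub (continuous_id.dist continuous_const)).rpow_const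
      fun _ => Or.inr (by positivity)).continuousOn.mul (hh.1.mono hsub).abs
  have hbdd : BddAbove (g '' ball x r) :=
    ((isCompact_closedBall x r).bddAbove_image hg).mono (image_mono ball_subset_closedBall)
  set F := sSup (g '' ball x r)
  have hgF : ∀ z ∈ ball x r, g z ≤ F := fun z hz => le_csSup hbdd (mem_image_of_mem g hz)
  have hgx : g x = r ^ (n / p) * |h x| := by simp only [g, dist_self, sub_zero]
  have hgx0 : 0 ≤ g x := by rw [hgx]; positivity
  have hF0 : 0 ≤ F := hgx0.trans (hgF x (mem_ball_self hr))
  have hvol := unitBallVol_pos n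
  have hI : 0 ≤ ∫ z in ball x r, |h z| ^ p :=
    setIntegral_nonneg measurableSet_ball fun _ _ => by positivity
  have hFp : F ^ p ≤ 2 ^ (n / p) / unitBallVol n * ∫ z in ball x r, |h z| ^ p := by
    refine Real.rpow_le_of_le_mul_rpow_one_sub hF0 (by positivity) hp.ne' ?_
    refine csSup_le ((nonempty_ball.2 hr).image g) (forall_mem_image.2 fun y hy => ?_)
    exact (hh.rpow_dist_mul_abs_le hsub hp hp1 hgF hy).trans_eq (by ring)
  have hx : r ^ n * |h x| ^ p ≤ F ^ p :=
    calc r ^ n * |h x| ^ p = g x ^ p := by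
          rw [hgx, Real.mul_rpow (by positivity) (abs_nonneg _), ← Real.rpow_mul hr.le,
            div_mul_cancel₀ _ hp.ne', Real.rpow_natCast]
      _ ≤ F ^ p := Real.rpow_le_rpow hgx0 (hgF x (mem_ball_self hr)) hp.le
  calc |h x| ^ p = r ^ n * |h x| ^ p / r ^ n := by field_simp
    _ ≤ 2 ^ (n / p) / unitBallVol n * (∫ z in ball x r, |h z| ^ p) / r ^ n := by
        gcongr ?_ / _
        exact hx.trans hFp
    _ = 2 ^ (n / p) / (unitBallVol n * r ^ n) * ∫ z in ball x r, |h z| ^ p := by ring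

end HarmonicOnSet

theorem abs_harmonic_rpow_quasiNearlySubharmonic_general
    {n : ℕ} (p : ℝ) (hp : 0 < p) :
    ∃ K : ℝ, 1 ≤ K ∧
      ∀ (D : Set (EuclideanSpace ℝ (Fin n))), IsOpen D → IsConnected D →
        ∀ h : EuclideanSpace ℝ (Fin n) → ℝ, HarmonicOnSet h D →
          ∀ x r, 0 < r → closedBall x r ⊆ D →
            |h x| ^ p ≤ K / (unitBallVol n * r ^ n) * ∫ y in ball x r, |h y| ^ p := by
  have hK : (1 : ℝ) ≤ 2 ^ (n / p) := Real.one_le_rpow (by norm_num) (by positivity)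
  refine ⟨2 ^ (n / p), hK, fun D _ _ h hh => ?_⟩
  rcases le_total p 1 with hp1 | hp1
  · exact hh.quasiNearlySubharmonicOn_abs_rpow_of_le_one hp hp1
  · exact (hh.quasiNearlySubharmonicOn_abs_rpow_of_one_le hp1).mono_const
      (fun _ _ => by positivity) hK

/-- If `h : D → ℝ` is harmonic on a domain `D ⊆ ℝⁿ`, `n ≥ 2`, and `p > 0`, then `|h|^p` is
quasi-nearly subharmonic: there is `K ≥ 1`, depending only on `n` and `p`, with
`|h(x)|^p ≤ (K/(νₙ rⁿ)) ∫_{B(x,r)} |h(y)|^p dm(y)` for all closed balls `B̄(x,r) ⊆ D`. -/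
theorem abs_harmonic_rpow_quasiNearlySubharmonic
    {n : ℕ} (hn : 2 ≤ n) (p : ℝ) (hp : 0 < p) :
    ∃ K : ℝ, 1 ≤ K ∧
      ∀ (D : Set (EuclideanSpace ℝ (Fin n))), IsOpen D → IsConnected D →
        ∀ h : EuclideanSpace ℝ (Fin n) → ℝ, HarmonicOnSet h D →
          ∀ x r, 0 < r → closedBall x r ⊆ D →
            |h x| ^ p ≤ K / (unitBallVol n * r ^ n) * ∫ y in ball x r, |h y| ^ p :=
  abs_harmonic_rpow_quasiNearlySubharmonic_general p hp
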